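/- Let D be an equireplicate design with n blocks of size k on n symbols (each symbol in exactly k blocks) such that every pair of distinct blocks intersects in either λ₁ = ⌊k(k−1)/(n−1)⌋ or λ₂ = λ₁+1 symbols, with (n−1) ∤ k(k−1), and such that every block meets exactly n₁ = λ₂(n−1) − k(k−1) other blocks in λ₁ symbols. Then every pair of distinct symbols is covered by either λ₁ or λ₂ blocks. -/

import Mathlib

/-!
Let `N` be the point–block incidence matrix. The covering numbers are the entries of `N * Nᵀ`
and the block intersection numbers those of `Nᵀ * N`. Both Gram matrices have constant diagonal
`k` and entry sum `n k²`, and by Tsuji's identity (cyclicity of the trace) the same sum of squared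
entries, so the off-diagonal covering numbers and the off-diagonal intersection numbers have the
same first two moments. The quadratic `(x - λ₁) (x - λ₂)` is nonnegative on the integers and
vanishes exactly at `λ₁` and `λ₂ = λ₁ + 1`. Its sum over the intersection numbers is therefore
`0`, hence so is its sum over the covering numbers, and each of these lies in `{λ₁, λ₂}`.
-/

open Finset Matrix

theorem sum_offDiag_add_sum_diag {ι M : Type*} [Fintype ι] [DecidableEq ι] [AddCommMonoid M]
    (f : ι → ι → M) :
    ∑ p ∈ (univ : Finset ι).offDiag, f p.1 p.2 + ∑ i, f i i = ∑ i, ∑ j, f i j := by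
  rw [← sum_product', ← diag_union_offDiag, sum_union (disjoint_diag_offDiag _), add_comm]
  congr 1
  exact (sum_nbij' Prod.fst (fun i => (i, i)) (by simp) (by simp) (by simp) (by simp)
    (by simp)).symm

theorem sum_offDiag_eq_of_sum_eq_of_diag_eq {ι M : Type*} [Fintype ι] [DecidableEq ι]
    [AddCancelCommMonoid M] {f g : ι → ι → M} (hsum : ∑ i, ∑ j, f i j = ∑ i, ∑ j, g i j)
    (hdiag : ∀ i, f i i = g i i) :
    ∑ p ∈ (univ : Finset ι).offDiag, f p.1 p.2 = ∑ p ∈ (univ : Finset ι).offDiag, g p.1 p.2 := by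
  apply add_right_cancel (b := ∑ i, f i i)
  rw [sum_offDiag_add_sum_diag, hsum, sum_congr rfl fun i _ => hdiag i, sum_offDiag_add_sum_diag]

theorem eq_or_eq_add_one_of_sum_eq_of_sum_sq_eq {σ : Type*} {S : Finset σ} {x y : σ → ℤ} (L : ℤ)
    (hsum : ∑ p ∈ S, x p = ∑ p ∈ S, y p) (hsq : ∑ p ∈ S, x p ^ 2 = ∑ p ∈ S, y p ^ 2)
    (hy : ∀ p ∈ S, y p = L ∨ y p = L + 1) : ∀ p ∈ S, x p = L ∨ x p = L + 1 := by
  have expand : ∀ z : σ → ℤ, ∑ p ∈ S, (z p - L) * (z p - L - 1)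
      = ∑ p ∈ S, z p ^ 2 - (2 * L + 1) * ∑ p ∈ S, z p + #S * (L * (L + 1)) := by
    intro z
    rw [mul_sum, ← sum_sub_distrib, ← nsmul_eq_mul, ← sum_const, ← sum_add_distrib]
    exact sum_congr rfl fun p _ => by ring
  have hy0 : ∑ p ∈ S, (y p - L) * (y p - L - 1) = 0 :=
    sum_eq_zero fun p hp => by rcases hy p hp with h | h <;> simp [h]
  have hx0 : ∑ p ∈ S, (x p - L) * (x p - L - 1) = 0 := by rw [expand, hsum, hsq, ← expand, hy0]
  have hnonneg : ∀ z : ℤ, 0 ≤ (z - L) * (z - L - 1) := fun z => by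
    nlinarith [Int.le_self_sq (z - L)]
  intro p hp
  have hxp : (x p - L) * (x p - L - 1) = 0 :=
    (sum_eq_zero_iff_of_nonneg fun p _ => hnonneg (x p)).1 hx0 p hp
  rcases mul_eq_zero.1 hxp with h | h <;> omega

section Gram

variable {R m n : Type*} [CommRing R] [Fintype m] [Fintype n]

theorem sum_sum_sq_eq_trace_mul_transpose (A : Matrix m n R) :
    ∑ i, ∑ j, A i j ^ 2 = (A * Aᵀ).trace := by
  simp [trace, mul_apply, sq]

theorem sum_sum_sq_transpose_mul_self (N : Matrix m n R) :
    ∑ i, ∑ j, (Nᵀ * N) i j ^ 2 = ∑ s, ∑ t, (N * Nᵀ) s t ^ 2 := by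
  simp only [sum_sum_sq_eq_trace_mul_transpose, transpose_mul, transpose_transpose,
    Matrix.mul_assoc]
  rw [trace_mul_comm, Matrix.mul_assoc, Matrix.mul_assoc]

theorem sum_sum_transpose_mul_self (N : Matrix m n R) :
    ∑ i, ∑ j, (Nᵀ * N) i j = ∑ s, (∑ i, N s i) ^ 2 := by
  simp only [mul_apply, transpose_apply, sq, sum_mul_sum]
  exact (sum_congr rfl fun _ _ => sum_comm).trans sum_comm

theorem sum_sum_mul_transpose_self (N : Matrix m n R) :
    ∑ s, ∑ t, (N * Nᵀ) s t = ∑ i, (∑ s, N s i) ^ 2 := by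
  simpa using sum_sum_transpose_mul_self Nᵀ

end Gram

section Incidence

variable {α β : Type*} [DecidableEq α] (B : β → Finset α)

def incidenceMatrix : Matrix α β ℤ := of fun s i => if s ∈ B i then 1 else 0

theorem transpose_mul_incidenceMatrix_apply [Fintype α] (i j : β) :
    ((incidenceMatrix B)ᵀ * incidenceMatrix B) i j = #(B i ∩ B j) := by
  simp [incidenceMatrix, mul_apply, ← ite_and, ← mem_inter, inter_comm]

theorem incidenceMatrix_mul_transpose_apply [Fintype β] (s t : α) :
    (incidenceMatrix B * (incidenceMatrix B)ᵀ) s t = #{i | s ∈ B i ∧ t ∈ B i} := by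
  simp [incidenceMatrix, mul_apply, ← ite_and, sum_boole, and_comm]

theorem sum_incidenceMatrix_apply_left [Fintype β] (s : α) :
    ∑ i, incidenceMatrix B s i = #{i | s ∈ B i} := by
  simp [incidenceMatrix, sum_boole]

theorem sum_incidenceMatrix_apply_right [Fintype α] (i : β) :
    ∑ s, incidenceMatrix B s i = #(B i) := by
  simp [incidenceMatrix]

end Incidence

theorem near_youden_dual_general (n k lam1 : ℕ)
    (B : Fin n → Finset (Fin n))
    (hsize : ∀ i, (B i).card = k)
    (hrep : ∀ s : Fin n, (Finset.univ.filter fun i => s ∈ B i).card = k)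
    (hint : ∀ i j : Fin n, i ≠ j →
      (B i ∩ B j).card = lam1 ∨ (B i ∩ B j).card = lam1 + 1) :
    ∀ p q : Fin n, p ≠ q →
      (Finset.univ.filter fun i => p ∈ B i ∧ q ∈ B i).card = lam1 ∨
      (Finset.univ.filter fun i => p ∈ B i ∧ q ∈ B i).card = lam1 + 1 := by
  set N := incidenceMatrix B
  have hdiag : ∀ s, (N * Nᵀ) s s = (Nᵀ * N) s s := by
    simp [N, transpose_mul_incidenceMatrix_apply, incidenceMatrix_mul_transpose_apply, hsize, hrep]
  have hsum : ∑ s, ∑ t, (N * Nᵀ) s t = ∑ i, ∑ j, (Nᵀ * N) i j := by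
    simp [N, sum_sum_mul_transpose_self, sum_sum_transpose_mul_self,
      sum_incidenceMatrix_apply_left, sum_incidenceMatrix_apply_right, hsize, hrep]
  have hcover := eq_or_eq_add_one_of_sum_eq_of_sum_sq_eq (lam1 : ℤ)
    (sum_offDiag_eq_of_sum_eq_of_diag_eq hsum hdiag)
    (sum_offDiag_eq_of_sum_eq_of_diag_eq (sum_sum_sq_transpose_mul_self N).symm
      fun s => by rw [hdiag])
    (fun p hp => by
      rw [transpose_mul_incidenceMatrix_apply]
      exact_mod_cast hint p.1 p.2 (mem_offDiag.1 hp).2.2)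
  intro p q hpq
  have hpq_cover := hcover (p, q) (by simpa using hpq)
  rw [incidenceMatrix_mul_transpose_apply] at hpq_cover
  exact_mod_cast hpq_cover

/-- The dual theorem for near Youden rectangles (Theorem 5): an equireplicate
symmetric design whose blocks pairwise intersect in `λ₁` or `λ₂ = λ₁+1`
symbols, with each block meeting exactly `λ₂(n-1) - k(k-1)` other blocks in
`λ₁` symbols, has every pair of distinct symbols covered by `λ₁` or `λ₂`
blocks. -/
theorem near_youden_dual (n k lam1 : ℕ) (hn : 1 < n) (hk : 0 < k)
    (hlam1 : lam1 = k * (k - 1) / (n - 1))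
    (hnd : ¬ (n - 1) ∣ k * (k - 1))
    (B : Fin n → Finset (Fin n))
    (hsize : ∀ i, (B i).card = k)
    (hrep : ∀ s : Fin n, (Finset.univ.filter fun i => s ∈ B i).card = k)
    (hint : ∀ i j : Fin n, i ≠ j →
      (B i ∩ B j).card = lam1 ∨ (B i ∩ B j).card = lam1 + 1)
    (hn1 : ∀ i : Fin n,
      (Finset.univ.filter fun j : Fin n => j ≠ i ∧ (B i ∩ B j).card = lam1).card
        = (lam1 + 1) * (n - 1) - k * (k - 1)) :
    ∀ p q : Fin n, p ≠ q →
      (Finset.univ.filter fun i => p ∈ B i ∧ q ∈ B i).card = lam1 ∨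
      (Finset.univ.filter fun i => p ∈ B i ∧ q ∈ B i).card = lam1 + 1 :=
  near_youden_dual_general n k lam1 B hsize hrep hint
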